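/- arXiv:2103.12967 — 3 statements merged into one kernel-verified Lean document; each statement's English description precedes it below -/
import Mathlib

section
/- The function g(p) = tan((1/2 − p)π) satisfies (π·g(p) − 1/p)/(1/p) = O(p²) as p → 0⁺; more precisely, |π·tan((1/2 − p)π) − 1/p| ≤ C·p for all sufficiently small p > 0 and some constant C, so that the relative difference between π·g(p) and the harmonic-mean transform 1/p is O(p²). -/
open Filter Set Real

/-! Since `tan (π/2 - x) = cot x`, the claim is `|π (cot (π p) - (π p)⁻¹)| = O(p)`.
With `x cos x - sin x = -x³/3 + O(x⁵)` from the Taylor bounds for `sin` and `cos`, and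
`sin x ≥ x/2` on `(0, 1]`, one gets `|cot x - x⁻¹| = |x cos x - sin x| / (x sin x) ≤ x`. -/

lemma abs_mul_cos_sub_sin_le {x : ℝ} (hx : |x| ≤ 1) :
    |x * cos x - sin x| ≤ |x| ^ 3 / 2 := by
  have hcos := cos_bound hx
  have hsin := sin_bound hx
  have hx0 := abs_nonneg x
  have hx4 : |x| ^ 4 ≤ |x| ^ 3 := pow_le_pow_of_le_one hx0 hx (by norm_num)
  have hx5 : |x| ^ 5 ≤ |x| ^ 3 := pow_le_pow_of_le_one hx0 hx (by norm_num)
  calc |x * cos x - sin x|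
      = |x * (cos x - (1 - x ^ 2 / 2)) - (sin x - (x - x ^ 3 / 6)) - x ^ 3 / 3| := by ring_nf
    _ ≤ |x| * |cos x - (1 - x ^ 2 / 2)| + |sin x - (x - x ^ 3 / 6)| + |x| ^ 3 / 3 := by
        rw [← abs_mul, show |x| ^ 3 / 3 = |x ^ 3 / 3| by simp [abs_div, abs_pow]]
        exact (abs_sub _ _).trans (add_le_add_left (abs_sub _ _) _)
    _ ≤ |x| * (|x| ^ 4 * (5 / 96)) + |x| ^ 5 / 100 + |x| ^ 3 / 3 := by gcongr
    _ ≤ |x| ^ 3 / 2 := by nlinarith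

lemma tan_pi_div_two_sub_eq_cot (x : ℝ) : tan (π / 2 - x) = cot x := by
  rw [tan_pi_div_two_sub, tan_eq_sin_div_cos, inv_div, cot_eq_cos_div_sin]

lemma abs_cot_sub_inv_le {x : ℝ} (hx0 : 0 < x) (hx1 : x ≤ 1) : |cot x - x⁻¹| ≤ x := by
  have hsin : x / 2 ≤ sin x := by
    nlinarith [sin_gt_sub_cube hx0, pow_le_pow_of_le_one hx0.le hx1 (by norm_num : 1 ≤ 3)]
  have hsin0 : 0 < sin x := by linarith
  have hcubic := abs_mul_cos_sub_sin_le (abs_le.mpr ⟨by linarith, hx1⟩)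
  rw [abs_of_pos hx0] at hcubic
  have hcot : cot x - x⁻¹ = (x * cos x - sin x) / (x * sin x) := by
    rw [cot_eq_cos_div_sin]
    field_simp
  rw [hcot, abs_div, abs_of_pos (mul_pos hx0 hsin0), div_le_iff₀ (mul_pos hx0 hsin0)]
  nlinarith [mul_le_mul_of_nonneg_left hsin (by positivity : 0 ≤ x ^ 2)]

theorem cauchy_harmonic_equiv :
    ∃ C > 0, ∀ᶠ p in nhdsWithin 0 (Ioi (0 : ℝ)),
      |Real.pi * Real.tan ((1 / 2 - p) * Real.pi) - 1 / p| ≤ C * p := by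
  refine ⟨π ^ 2, by positivity, ?_⟩
  filter_upwards [Ioo_mem_nhdsGT (by norm_num : (0 : ℝ) < 1 / 4)] with p ⟨hp0, hp1⟩
  have hx0 : 0 < p * π := by positivity
  have hx1 : p * π ≤ 1 := by nlinarith [pi_le_four]
  have hrewrite : π * tan ((1 / 2 - p) * π) - 1 / p = π * (cot (p * π) - (p * π)⁻¹) := by
    rw [show (1 / 2 - p) * π = π / 2 - p * π by ring, tan_pi_div_two_sub_eq_cot]
    field_simp
  calc |π * tan ((1 / 2 - p) * π) - 1 / p| = π * |cot (p * π) - (p * π)⁻¹| := by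
        rw [hrewrite, abs_mul, abs_of_pos pi_pos]
    _ ≤ π * (p * π) := by gcongr; exact abs_cot_sub_inv_le hx0 hx1
    _ = π ^ 2 * p := by ring
end

section
/- Let X₁,…,Xₙ be i.i.d. standard Cauchy, δ ∈ (0,1), ν_δ = tan(π(δ − 1/2)), Yᵢ = max(Xᵢ, ν_δ), and let m = #{i : Xᵢ < ν_δ}. Then for t > 0 and 1 ≤ j ≤ n−1, P((1/n)∑ᵢYᵢ ≥ t, m = j) ≤ C(n,j)·δʲ·P(X₁ ≥ t), where C(n,j) is the binomial coefficient. -/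
/-!
Split the event according to the set `S` of the `j` coordinates below `ν`. On that event the
other `n - j` coordinates carry the sum: `∑_{i ∉ S} X i ≥ (n - j) t`, because the truncated ones
contribute `j ν ≤ j t` when `ν ≤ t`, and each untruncated one is `≥ ν > t` otherwise. By
independence the probability is at most `δ ^ j * P(∑_{i ∉ S} X i ≥ (n - j) t)`, and by stability
of the Cauchy law `∑_{i ∉ S} X i` is Cauchy with scale `n - j`, so the second factor is
`P(X₁ ≥ t)`. There are `n.choose j` choices of `S`. Stability is proved by convolving Cauchy
densities through an explicit primitive.
-/

open MeasureTheory ProbabilityTheory Filter Set Finset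
open Real Topology Bornology
open scoped NNReal ENNReal

namespace ProbabilityTheory

lemma hasDerivAt_arctan_div_pi (x₀ : ℝ) {γ : ℝ≥0} (hγ : γ ≠ 0) (x : ℝ) :
    HasDerivAt (fun x ↦ arctan ((x - x₀) / γ) / π) (cauchyPDFReal x₀ γ x) x := by
  have hγ' : (γ : ℝ) ≠ 0 := by exact_mod_cast hγ
  refine ((((hasDerivAt_id' x).sub_const x₀).div_const (γ : ℝ)).arctan.div_const π).congr_deriv ?_
  rw [cauchyPDFReal_def]
  field_simp
  ring

lemma tendsto_arctan_div_atTop (x₀ : ℝ) {γ : ℝ≥0} (hγ : γ ≠ 0) :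
    Tendsto (fun x ↦ arctan ((x - x₀) / γ)) atTop (𝓝 (π / 2)) :=
  (tendsto_nhds_of_tendsto_nhdsWithin tendsto_arctan_atTop).comp
    ((tendsto_atTop_add_const_right _ _ tendsto_id).atTop_div_const (by positivity))

lemma cauchyMeasure_Ici (x₀ : ℝ) {γ : ℝ≥0} (hγ : γ ≠ 0) (s : ℝ) :
    cauchyMeasure x₀ γ (Ici s) = ENNReal.ofReal (1 / 2 - arctan ((s - x₀) / γ) / π) := by
  rw [cauchyMeasure_of_scale_ne_zero x₀ hγ, withDensity_apply _ measurableSet_Ici]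
  simp only [cauchyPDF_def]
  rw [← ofReal_integral_eq_lintegral_ofReal (integrable_cauchyPDFReal x₀).integrableOn
      (ae_of_all _ fun x ↦ (cauchyPDF_pos x₀ hγ x).le),
    integral_Ici_eq_integral_Ioi, integral_Ioi_of_hasDerivAt_of_tendsto'
      (fun x _ ↦ hasDerivAt_arctan_div_pi x₀ hγ x) (integrable_cauchyPDFReal x₀).integrableOn
      ((tendsto_arctan_div_atTop x₀ hγ).div_const π)]
  congr 1
  field_simp

lemma cauchyMeasure_Iio (x₀ : ℝ) {γ : ℝ≥0} (hγ : γ ≠ 0) (s : ℝ) :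
    cauchyMeasure x₀ γ (Iio s) = ENNReal.ofReal (1 / 2 + arctan ((s - x₀) / γ) / π) := by
  have hlt : arctan ((s - x₀) / γ) / π < 1 / 2 := by
    rw [div_lt_iff₀ pi_pos]; linarith [arctan_lt_pi_div_two ((s - x₀) / γ)]
  rw [← compl_Ici, prob_compl_eq_one_sub measurableSet_Ici, cauchyMeasure_Ici x₀ hγ,
    ← ENNReal.ofReal_one, ← ENNReal.ofReal_sub _ (by linarith)]
  congr 1
  ring

lemma cauchyMeasure_Ici_mul {γ : ℝ≥0} (hγ : γ ≠ 0) (s : ℝ) :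
    cauchyMeasure 0 γ (Ici (γ * s)) = cauchyMeasure 0 1 (Ici s) := by
  have hγ' : (γ : ℝ) ≠ 0 := by exact_mod_cast hγ
  simp only [cauchyMeasure_Ici 0 hγ, cauchyMeasure_Ici 0 one_ne_zero, sub_zero, NNReal.coe_one,
    div_one, mul_div_cancel_left₀ s hγ']

lemma map_eq_cauchyMeasure_of_measure_Ici {Ω : Type*} [MeasurableSpace Ω] {μ : Measure Ω}
    [IsProbabilityMeasure μ] {X : Ω → ℝ} (hX : Measurable X)
    (h : ∀ t, (μ {ω | X ω ≥ t}).toReal = 1 / 2 - arctan t / π) :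
    μ.map X = cauchyMeasure 0 1 := by
  have : IsProbabilityMeasure (μ.map X) := Measure.isProbabilityMeasure_map hX.aemeasurable
  refine Measure.ext_of_Ici _ _ fun s ↦ ?_
  rw [Measure.map_apply hX measurableSet_Ici, cauchyMeasure_Ici 0 one_ne_zero, sub_zero,
    NNReal.coe_one, div_one, ← h, ENNReal.ofReal_toReal (measure_ne_top _ _)]
  rfl

lemma tendsto_log_sq_add_sub_log_sq {c : ℝ} (hc : c ≠ 0) (d : ℝ) :
    Tendsto (fun y ↦ log (c ^ 2 + (y - d) ^ 2) - log (y ^ 2)) (cobounded ℝ) (𝓝 0) := by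
  -- `c ^ 2 + (y - d) ^ 2 = y ^ 2 * g y⁻¹` with `g` continuous and `g 0 = 1`
  set g : ℝ → ℝ := fun u ↦ c ^ 2 * u ^ 2 + (1 - d * u) ^ 2
  have hg : Tendsto (fun y ↦ log (g y⁻¹)) (cobounded ℝ) (𝓝 0) := by
    have hcont : ContinuousAt (fun u ↦ log (g u)) 0 :=
      ContinuousAt.log (by fun_prop) (by simp [g])
    have hg0 : log (g 0) = 0 := by simp [g]
    exact hg0 ▸ hcont.tendsto.comp tendsto_inv₀_cobounded
  refine hg.congr' ?_
  filter_upwards [eventually_ne_cobounded 0] with y hy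
  have hgy : g y⁻¹ ≠ 0 := by positivity
  rw [eq_sub_iff_add_eq, add_comm, ← log_mul (pow_ne_zero 2 hy) hgy]
  congr 1
  simp only [g]
  field_simp

lemma sq_sub_add_sq_ne_zero {a b x : ℝ} (h : a ≠ b ∨ x ≠ 0) : (a - b) ^ 2 + x ^ 2 ≠ 0 := by
  rcases h with h | h
  · have : a - b ≠ 0 := sub_ne_zero.mpr h
    positivity
  · positivity

/-- Partial-fraction primitive of `y ↦ cauchyPDFReal 0 a y * cauchyPDFReal 0 b (x - y)`.
It degenerates when `a = b` and `x = 0`, which is harmless since the convolution of densities is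
only needed almost everywhere. -/
noncomputable def cauchyConvPrimitive (a b : ℝ≥0) (x y : ℝ) : ℝ :=
  a * b / (π ^ 2 * (((a + b : ℝ) ^ 2 + x ^ 2) * ((a - b : ℝ) ^ 2 + x ^ 2))) *
    (x * (log (a ^ 2 + y ^ 2) - log (b ^ 2 + (y - x) ^ 2))
      + (b ^ 2 + x ^ 2 - a ^ 2) / a * arctan (y / a)
      + (a ^ 2 + x ^ 2 - b ^ 2) / b * arctan ((y - x) / b))

lemma hasDerivAt_cauchyConvPrimitive {a b : ℝ≥0} (ha : a ≠ 0) (hb : b ≠ 0) {x : ℝ}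
    (hx : a ≠ b ∨ x ≠ 0) (y : ℝ) :
    HasDerivAt (cauchyConvPrimitive a b x)
      (cauchyPDFReal 0 a y * cauchyPDFReal 0 b (x - y)) y := by
  have ha' : (a : ℝ) ≠ 0 := by exact_mod_cast ha
  have hb' : (b : ℝ) ≠ 0 := by exact_mod_cast hb
  have hK := sq_sub_add_sq_ne_zero (hx.imp_left NNReal.coe_injective.ne)
  have hA : (a : ℝ) ^ 2 + y ^ 2 ≠ 0 := by positivity
  have hB : (b : ℝ) ^ 2 + (y - x) ^ 2 ≠ 0 := by positivity
  have hlogA := (((hasDerivAt_id' y).pow 2).const_add ((a : ℝ) ^ 2)).log hA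
  have hlogB := ((((hasDerivAt_id' y).sub_const x).pow 2).const_add ((b : ℝ) ^ 2)).log hB
  have hatanA := ((hasDerivAt_id' y).div_const (a : ℝ)).arctan
  have hatanB := (((hasDerivAt_id' y).sub_const x).div_const (b : ℝ)).arctan
  refine ((((hlogA.sub hlogB).const_mul x).add
    (hatanA.const_mul ((b ^ 2 + x ^ 2 - a ^ 2) / a))).add
    (hatanB.const_mul ((a ^ 2 + x ^ 2 - b ^ 2) / b))).const_mul
    (a * b / (π ^ 2 * (((a + b : ℝ) ^ 2 + x ^ 2) * ((a - b : ℝ) ^ 2 + x ^ 2)))) |>.congr_deriv ?_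
  have hK' : ((a + b : ℝ) ^ 2 + x ^ 2) ≠ 0 := by positivity
  have hB' : (b : ℝ) ^ 2 + (x - y) ^ 2 ≠ 0 := by positivity
  simp only [cauchyPDFReal_def, Pi.pow_apply, sub_zero, Nat.cast_ofNat, mul_one]
  field_simp
  ring

lemma cauchyConvPrimitive_neg (a b : ℝ≥0) (x y : ℝ) :
    cauchyConvPrimitive a b x (-y) = -cauchyConvPrimitive a b (-x) y := by
  simp only [cauchyConvPrimitive, neg_div, arctan_neg, neg_sq, show -y - x = -(y - -x) by ring]
  ring

lemma tendsto_cauchyConvPrimitive_atTop {a b : ℝ≥0} (ha : a ≠ 0) (hb : b ≠ 0) {x : ℝ}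
    (hx : a ≠ b ∨ x ≠ 0) :
    Tendsto (cauchyConvPrimitive a b x) atTop (𝓝 (cauchyPDFReal 0 (a + b) x / 2)) := by
  have ha' : (a : ℝ) ≠ 0 := by exact_mod_cast ha
  have hb' : (b : ℝ) ≠ 0 := by exact_mod_cast hb
  have hlog : Tendsto (fun y ↦ log (a ^ 2 + y ^ 2) - log (b ^ 2 + (y - x) ^ 2)) atTop (𝓝 0) := by
    simpa using ((tendsto_log_sq_add_sub_log_sq ha' 0).sub
      (tendsto_log_sq_add_sub_log_sq hb' x)).mono_left IsOrderBornology.atTop_le_cobounded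
  have hatanA : Tendsto (fun y ↦ arctan (y / a)) atTop (𝓝 (π / 2)) := by
    simpa using tendsto_arctan_div_atTop 0 ha
  have hK := sq_sub_add_sq_ne_zero (hx.imp_left NNReal.coe_injective.ne)
  have hK' : ((a + b : ℝ) ^ 2 + x ^ 2) ≠ 0 := by positivity
  have hlim : a * b / (π ^ 2 * (((a + b : ℝ) ^ 2 + x ^ 2) * ((a - b : ℝ) ^ 2 + x ^ 2))) *
      (x * 0 + (b ^ 2 + x ^ 2 - a ^ 2) / a * (π / 2) + (a ^ 2 + x ^ 2 - b ^ 2) / b * (π / 2))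
      = cauchyPDFReal 0 (a + b) x / 2 := by
    rw [cauchyPDFReal_def]
    push_cast
    field_simp
    ring
  rw [← hlim]
  exact (((hlog.const_mul x).add (hatanA.const_mul ((b ^ 2 + x ^ 2 - a ^ 2) / a))).add
    ((tendsto_arctan_div_atTop x hb).const_mul ((a ^ 2 + x ^ 2 - b ^ 2) / b))).const_mul _

lemma tendsto_cauchyConvPrimitive_atBot {a b : ℝ≥0} (ha : a ≠ 0) (hb : b ≠ 0) {x : ℝ}
    (hx : a ≠ b ∨ x ≠ 0) :
    Tendsto (cauchyConvPrimitive a b x) atBot (𝓝 (-(cauchyPDFReal 0 (a + b) x / 2))) := by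
  have hx' : a ≠ b ∨ -x ≠ 0 := by rwa [neg_ne_zero]
  have h := ((tendsto_cauchyConvPrimitive_atTop ha hb hx').comp tendsto_neg_atBot_atTop).neg
  simp only [cauchyPDFReal_def, neg_sq, sub_zero] at h ⊢
  refine h.congr fun y ↦ ?_
  simp [cauchyConvPrimitive_neg]

lemma integrable_cauchyPDFReal_mul_cauchyPDFReal_sub (a b : ℝ≥0) (x : ℝ) :
    Integrable (fun y ↦ cauchyPDFReal 0 a y * cauchyPDFReal 0 b (x - y)) := by
  refine (integrable_cauchyPDFReal 0).mul_bdd (c := π⁻¹ * b⁻¹)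
    ((measurable_cauchyPDFReal 0 b).comp (measurable_const_sub x)).aestronglyMeasurable
    (ae_of_all _ fun y ↦ ?_)
  rw [Real.norm_of_nonneg (by rw [cauchyPDFReal_def]; positivity), cauchyPDFReal_def']
  exact mul_le_of_le_one_right (by positivity)
    (inv_le_one_of_one_le₀ (le_add_of_nonneg_right (sq_nonneg _)))

lemma integral_cauchyPDFReal_mul_cauchyPDFReal_sub {a b : ℝ≥0} (ha : a ≠ 0) (hb : b ≠ 0) {x : ℝ}
    (hx : a ≠ b ∨ x ≠ 0) :
    ∫ y, cauchyPDFReal 0 a y * cauchyPDFReal 0 b (x - y) = cauchyPDFReal 0 (a + b) x := by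
  rw [integral_of_hasDerivAt_of_tendsto (hasDerivAt_cauchyConvPrimitive ha hb hx)
    (integrable_cauchyPDFReal_mul_cauchyPDFReal_sub a b x)
    (tendsto_cauchyConvPrimitive_atBot ha hb hx) (tendsto_cauchyConvPrimitive_atTop ha hb hx)]
  ring

lemma cauchyMeasure_conv (a b : ℝ≥0) :
    cauchyMeasure 0 a ∗ cauchyMeasure 0 b = cauchyMeasure 0 (a + b) := by
  rcases eq_or_ne a 0 with rfl | ha
  · simp [Measure.dirac_zero_conv]
  rcases eq_or_ne b 0 with rfl | hb
  · simp [Measure.conv_dirac_zero]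
  rw [cauchyMeasure_of_scale_ne_zero 0 ha, cauchyMeasure_of_scale_ne_zero 0 hb,
    cauchyMeasure_of_scale_ne_zero 0 (add_pos (pos_iff_ne_zero.2 ha) (pos_iff_ne_zero.2 hb)).ne',
    conv_withDensity_eq_lconvolution (measurable_cauchyPDF 0 a) (measurable_cauchyPDF 0 b)]
  refine withDensity_congr_ae ?_
  filter_upwards [Measure.ae_ne volume 0] with x hx
  rw [lconvolution_def, cauchyPDF_def,
    ← integral_cauchyPDFReal_mul_cauchyPDFReal_sub ha hb (.inr hx),
    ofReal_integral_eq_lintegral_ofReal (integrable_cauchyPDFReal_mul_cauchyPDFReal_sub a b x)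
      (ae_of_all _ fun y ↦ mul_nonneg (cauchyPDF_pos 0 ha y).le (cauchyPDF_pos 0 hb _).le)]
  refine lintegral_congr fun y ↦ ?_
  rw [ENNReal.ofReal_mul (cauchyPDF_pos 0 ha y).le, neg_add_eq_sub]
  rfl

lemma cauchyMeasure_Iio_tan {δ : ℝ} (hδ0 : 0 < δ) (hδ1 : δ < 1) :
    cauchyMeasure 0 1 (Iio (tan (π * (δ - 1 / 2)))) = ENNReal.ofReal δ := by
  rw [cauchyMeasure_Iio 0 one_ne_zero, sub_zero, NNReal.coe_one, div_one,
    arctan_tan (by nlinarith [pi_pos]) (by nlinarith [pi_pos])]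
  congr 1
  field_simp
  ring

lemma card_mul_le_sum_of_mul_le_sum_max {ι : Type*} [Fintype ι] (x : ι → ℝ) {ν t : ℝ}
    (h : Fintype.card ι * t ≤ ∑ i, max (x i) ν) :
    #{i | ¬x i < ν} * t ≤ ∑ i with ¬x i < ν, x i := by
  rcases le_or_gt ν t with hνt | htν
  · have hsplit : ∑ i, max (x i) ν = #{i | x i < ν} * ν + ∑ i with ¬x i < ν, x i := by
      rw [← sum_filter_add_sum_filter_not univ (x · < ν)]
      congr 1
      · rw [sum_congr rfl fun i hi ↦ max_eq_right (mem_filter.1 hi).2.le, sum_const, nsmul_eq_mul]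
      · exact sum_congr rfl fun i hi ↦ max_eq_left (not_lt.1 (mem_filter.1 hi).2)
    have hcard : (Fintype.card ι : ℝ) = #{i | x i < ν} + #{i | ¬x i < ν} := by
      rw [← Nat.cast_add, card_filter_add_card_filter_not, card_univ]
    have : (#{i | x i < ν} : ℝ) * ν ≤ #{i | x i < ν} * t := by gcongr
    rw [hsplit, hcard, add_mul] at h
    linarith
  · rw [← nsmul_eq_mul]
    exact card_nsmul_le_sum _ _ _ fun i hi ↦ htν.le.trans (not_lt.1 (mem_filter.1 hi).2)

section Independence

variable {Ω ι : Type*} [MeasurableSpace Ω] {μ : Measure Ω} {X : ι → Ω → ℝ}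

lemma iIndepFun.map_finsetSum_eq_cauchyMeasure [IsProbabilityMeasure μ] (hind : iIndepFun X μ)
    (hX : ∀ i, Measurable (X i)) {γ : ι → ℝ≥0} (hlaw : ∀ i, μ.map (X i) = cauchyMeasure 0 (γ i))
    (T : Finset ι) :
    μ.map (∑ i ∈ T, X i) = cauchyMeasure 0 (∑ i ∈ T, γ i) := by
  classical
  induction T using Finset.induction_on with
  | empty => simp [Pi.zero_def]
  | insert i T hi ih =>
    rw [sum_insert hi, sum_insert hi, add_comm (X i), add_comm (γ i),
      (hind.indepFun_finsetSum_of_notMem hX hi).map_add_eq_map_conv_map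
        (by fun_prop) (hX i), ih, hlaw, cauchyMeasure_conv]

lemma iIndepFun.measure_iInter_preimage_inter_sum_preimage (hind : iIndepFun X μ)
    (hX : ∀ i, Measurable (X i)) {S T : Finset ι} (hST : Disjoint S T) {A B : Set ℝ}
    (hA : MeasurableSet A) (hB : MeasurableSet B) :
    μ ((⋂ i ∈ S, X i ⁻¹' A) ∩ (∑ i ∈ T, X i) ⁻¹' B)
      = (∏ i ∈ S, μ (X i ⁻¹' A)) * μ ((∑ i ∈ T, X i) ⁻¹' B) := by
  have hindST : IndepFun (fun ω (i : S) ↦ X i ω)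
      ((fun v : T → ℝ ↦ ∑ i, v i) ∘ fun ω (i : T) ↦ X i ω) μ :=
    (hind.indepFun_finset S T hST hX).comp measurable_id (by fun_prop)
  have hSA : ⋂ i ∈ S, X i ⁻¹' A = (fun ω (i : S) ↦ X i ω) ⁻¹' univ.pi fun _ ↦ A := by
    ext ω
    simp
  have hTB : (∑ i ∈ T, X i) ⁻¹' B
      = ((fun v : T → ℝ ↦ ∑ i, v i) ∘ fun ω (i : T) ↦ X i ω) ⁻¹' B := by
    ext ω
    simp [Finset.sum_apply, Finset.sum_attach T (fun i ↦ X i ω)]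
  rw [hTB, hSA, hindST.measure_inter_preimage_eq_mul _ _ (.univ_pi fun _ ↦ hA) hB, ← hSA,
    hind.measure_inter_preimage_eq_mul S fun _ _ ↦ hA]

lemma iIndepFun.measure_sum_max_ge_and_card_lt_eq_le [Fintype ι] [IsProbabilityMeasure μ]
    (hind : iIndepFun X μ) (hX : ∀ i, Measurable (X i))
    (hlaw : ∀ i, μ.map (X i) = cauchyMeasure 0 1) (ν t : ℝ) {j : ℕ} (hj : j < Fintype.card ι) :
    μ {ω | Fintype.card ι * t ≤ ∑ i, max (X i ω) ν ∧ #{i | X i ω < ν} = j}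
      ≤ (Fintype.card ι).choose j * cauchyMeasure 0 1 (Iio ν) ^ j * cauchyMeasure 0 1 (Ici t) := by
  classical
  set E : Finset ι → Set Ω := fun S ↦
    (⋂ i ∈ S, X i ⁻¹' Iio ν) ∩ (∑ i ∈ Sᶜ, X i) ⁻¹' Ici (#Sᶜ * t)
  have hsub : {ω | Fintype.card ι * t ≤ ∑ i, max (X i ω) ν ∧ #{i | X i ω < ν} = j}
      ⊆ ⋃ S ∈ powersetCard j univ, E S := by
    rintro ω ⟨hsum, hcard⟩
    refine mem_iUnion₂.2
      ⟨univ.filter (X · ω < ν), mem_powersetCard.2 ⟨subset_univ _, hcard⟩, ?_, ?_⟩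
    · simp
    · simpa [compl_filter, Finset.sum_apply] using card_mul_le_sum_of_mul_le_sum_max _ hsum
  have hE : ∀ S ∈ powersetCard j univ,
      μ (E S) = cauchyMeasure 0 1 (Iio ν) ^ j * cauchyMeasure 0 1 (Ici t) := by
    intro S hS
    have hSc : #Sᶜ ≠ 0 := by
      rw [card_compl, (mem_powersetCard.1 hS).2]
      omega
    rw [hind.measure_iInter_preimage_inter_sum_preimage hX disjoint_compl_right measurableSet_Iio
      measurableSet_Ici, ← Measure.map_apply (by fun_prop) measurableSet_Ici,
      hind.map_finsetSum_eq_cauchyMeasure hX hlaw, sum_const, nsmul_one, ← NNReal.coe_natCast,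
      cauchyMeasure_Ici_mul (Nat.cast_ne_zero.2 hSc),
      prod_congr rfl fun i _ ↦ by rw [← Measure.map_apply (hX i) measurableSet_Iio, hlaw],
      prod_const, (mem_powersetCard.1 hS).2]
  calc _ ≤ μ (⋃ S ∈ powersetCard j univ, E S) := measure_mono hsub
    _ ≤ ∑ S ∈ powersetCard j univ, μ (E S) := measure_biUnion_finset_le _ _
    _ = _ := by
      rw [sum_congr rfl hE, sum_const, card_powersetCard, card_univ, nsmul_eq_mul, mul_assoc]

end Independence

end ProbabilityTheory

theorem truncated_cauchy_partial_bound_general {Ω : Type*} [MeasurableSpace Ω]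
    (μ : Measure Ω) [IsProbabilityMeasure μ]
    (n : ℕ) (hn : 0 < n)
    (X : Fin n → Ω → ℝ) (hX : ∀ i, Measurable (X i))
    (hiid : iIndepFun X μ)
    (hcauchy : ∀ i, ∀ t : ℝ,
      (μ {ω | X i ω ≥ t}).toReal = 1 / 2 - Real.arctan t / Real.pi)
    (δ : ℝ) (hδ0 : 0 < δ) (hδ1 : δ < 1)
    (ν : ℝ) (hν : ν = Real.tan (Real.pi * (δ - 1 / 2)))
    (t : ℝ)
    (j : ℕ) (hjn : j ≤ n - 1) :
    (μ {ω | (1 / n : ℝ) * ∑ i, max (X i ω) ν ≥ t ∧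
        (Finset.univ.filter (fun i => X i ω < ν)).card = j}).toReal ≤
      (n.choose j : ℝ) * δ ^ j * (μ {ω | X ⟨0, hn⟩ ω ≥ t}).toReal := by
  have hlaw i : μ.map (X i) = cauchyMeasure 0 1 :=
    map_eq_cauchyMeasure_of_measure_Ici (hX i) (hcauchy i)
  have hevent : {ω | (1 / n : ℝ) * ∑ i, max (X i ω) ν ≥ t ∧ #{i | X i ω < ν} = j}
      = {ω | Fintype.card (Fin n) * t ≤ ∑ i, max (X i ω) ν ∧ #{i | X i ω < ν} = j} := by
    have hn' : (0 : ℝ) < n := by exact_mod_cast hn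
    ext ω
    simp only [Set.mem_ofPred_eq, Fintype.card_fin, one_div, ge_iff_le, le_inv_mul_iff₀ hn']
  have hδ : cauchyMeasure 0 1 (Iio ν) = ENNReal.ofReal δ := hν ▸ cauchyMeasure_Iio_tan hδ0 hδ1
  have htail : cauchyMeasure 0 1 (Ici t) = μ {ω | X ⟨0, hn⟩ ω ≥ t} := by
    rw [← hlaw ⟨0, hn⟩, Measure.map_apply (hX _) measurableSet_Ici]
    rfl
  have hbound := hiid.measure_sum_max_ge_and_card_lt_eq_le hX hlaw ν t (j := j)
    (by rw [Fintype.card_fin]; omega)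
  rw [← hevent, Fintype.card_fin, hδ, htail] at hbound
  refine (ENNReal.toReal_mono (by finiteness) hbound).trans_eq ?_
  simp [ENNReal.toReal_pow, hδ0.le]

theorem truncated_cauchy_partial_bound {Ω : Type*} [MeasurableSpace Ω]
    (μ : Measure Ω) [IsProbabilityMeasure μ]
    (n : ℕ) (hn : 0 < n)
    (X : Fin n → Ω → ℝ) (hX : ∀ i, Measurable (X i))
    (hiid : iIndepFun X μ)
    (hcauchy : ∀ i, ∀ t : ℝ,
      (μ {ω | X i ω ≥ t}).toReal = 1 / 2 - Real.arctan t / Real.pi)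
    (δ : ℝ) (hδ0 : 0 < δ) (hδ1 : δ < 1)
    (ν : ℝ) (hν : ν = Real.tan (Real.pi * (δ - 1 / 2)))
    (t : ℝ) (ht : 0 < t)
    (j : ℕ) (hj1 : 1 ≤ j) (hjn : j ≤ n - 1) :
    (μ {ω | (1 / n : ℝ) * ∑ i, max (X i ω) ν ≥ t ∧
        (Finset.univ.filter (fun i => X i ω < ν)).card = j}).toReal ≤
      (n.choose j : ℝ) * δ ^ j * (μ {ω | X ⟨0, hn⟩ ω ≥ t}).toReal :=
  truncated_cauchy_partial_bound_general μ n hn X hX hiid hcauchy δ hδ0 hδ1 ν hν t j hjn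
end

section
/- Let U₁,…,Uₙ be nonnegative random variables, each with regularly varying survival function, that are pairwise asymptotically tail independent, with CDFs F₁,…,Fₙ. Then for n = 2: P(U₁ + U₂ > t) ∼ F̄₁(t) + F̄₂(t) as t → ∞, i.e. lim_{t→∞} P(U₁+U₂ > t)/(F̄₁(t)+F̄₂(t)) = 1. -/
open MeasureTheory Filter Set

/-!
Inclusion–exclusion, and a split on whether either summand exceeds `(1 - δ) t`, give the sandwich
`P(U₁ > t) + P(U₂ > t) - P(U₁ > t, U₂ > t) ≤ P(U₁ + U₂ > t)
  ≤ P(U₁ > (1 - δ) t) + P(U₂ > (1 - δ) t) + P(U₁ > δ t, U₂ > δ t)`.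
Divided by `F̄₁(t) + F̄₂(t)`, the joint tails vanish by tail independence (at `δ t` the ratio
`F̄ᵢ(δ t) / F̄ᵢ(t)` stays bounded by regular variation), and the `(1 - δ) t` terms are at most
`max ((1 - δ) ^ (-γ₁)) ((1 - δ) ^ (-γ₂))` in the limit, which tends to `1` as `δ → 0`.
-/

def IsRegularlyVarying (F : ℝ → ℝ) (γ : ℝ) : Prop :=
  ∀ y : ℝ, 0 < y → Tendsto (fun x => F (x * y) / F x) atTop (nhds (y ^ (-γ)))

theorem add_div_add_le_max {a b c d : ℝ} (hc : 0 < c) (hd : 0 < d) :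
    (a + b) / (c + d) ≤ max (a / c) (b / d) := by
  rw [div_le_iff₀ (add_pos hc hd), mul_add]
  have hac : a ≤ max (a / c) (b / d) * c := (div_le_iff₀ hc).1 (le_max_left _ _)
  have hbd : b ≤ max (a / c) (b / d) * d := (div_le_iff₀ hd).1 (le_max_right _ _)
  linarith

theorem IsRegularlyVarying.eventually_pos {F : ℝ → ℝ} {γ : ℝ} (hF : ∀ x, 0 ≤ F x)
    (h : IsRegularlyVarying F γ) : ∀ᶠ x in atTop, 0 < F x := by
  have hone : Tendsto (fun x => F (x * 1) / F x) atTop (nhds 1) := by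
    simpa using h 1 one_pos
  filter_upwards [hone.eventually (eventually_ne_nhds one_ne_zero)] with x hx
  refine (hF x).lt_of_ne fun hx0 => hx ?_
  rw [← hx0, div_zero]

theorem exists_max_rpow_one_sub_lt (γ₁ γ₂ : ℝ) {a : ℝ} (ha : 1 < a) :
    ∃ δ ∈ Ioo (0 : ℝ) 1, max ((1 - δ) ^ (-γ₁)) ((1 - δ) ^ (-γ₂)) < a := by
  have hcont : ContinuousAt (fun δ : ℝ => max ((1 - δ) ^ (-γ₁)) ((1 - δ) ^ (-γ₂))) 0 := by
    fun_prop (disch := norm_num)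
  have hlt : ∀ᶠ δ in nhds (0 : ℝ), max ((1 - δ) ^ (-γ₁)) ((1 - δ) ^ (-γ₂)) < a ∧ δ < 1 :=
    (hcont.eventually (eventually_lt_nhds (by simpa using ha))).and (eventually_lt_nhds one_pos)
  obtain ⟨δ, hδ0, hδa, hδ1⟩ := hlt.exists_gt
  exact ⟨δ, ⟨hδ0, hδ1⟩, hδa⟩

section TailSandwich

variable {F₁ F₂ B G : ℝ → ℝ}

theorem eventually_div_le_max_ratio_add (hB : ∀ x, 0 ≤ B x)
    (hF₁ : ∀ᶠ x in atTop, 0 < F₁ x) (hF₂ : ∀ᶠ x in atTop, 0 < F₂ x) {δ : ℝ} (hδ : 0 < δ)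
    (hup : ∀ t, G t ≤ F₁ (t * (1 - δ)) + F₂ (t * (1 - δ)) + B (t * δ)) :
    ∀ᶠ t in atTop, G t / (F₁ t + F₂ t) ≤
      max (F₁ (t * (1 - δ)) / F₁ t) (F₂ (t * (1 - δ)) / F₂ t) +
        B (t * δ) / (F₁ (t * δ) + F₂ (t * δ)) * max (F₁ (t * δ) / F₁ t) (F₂ (t * δ) / F₂ t) := by
  have hscale : Tendsto (fun t => t * δ) atTop atTop := tendsto_id.atTop_mul_const hδ
  filter_upwards [hF₁, hF₂, hscale.eventually hF₁, hscale.eventually hF₂]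
    with t h₁ h₂ h₁δ h₂δ
  have hS : 0 < F₁ t + F₂ t := add_pos h₁ h₂
  have hSδ : 0 < F₁ (t * δ) + F₂ (t * δ) := add_pos h₁δ h₂δ
  calc G t / (F₁ t + F₂ t)
      ≤ (F₁ (t * (1 - δ)) + F₂ (t * (1 - δ))) / (F₁ t + F₂ t) + B (t * δ) / (F₁ t + F₂ t) := by
        rw [← add_div]; exact div_le_div_of_nonneg_right (hup t) hS.le
    _ = (F₁ (t * (1 - δ)) + F₂ (t * (1 - δ))) / (F₁ t + F₂ t) +
          B (t * δ) / (F₁ (t * δ) + F₂ (t * δ)) * ((F₁ (t * δ) + F₂ (t * δ)) / (F₁ t + F₂ t)) := by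
        field_simp
    _ ≤ _ := by
        gcongr
        · exact add_div_add_le_max h₁ h₂
        · exact div_nonneg (hB _) hSδ.le
        · exact add_div_add_le_max h₁ h₂

theorem tendsto_div_add_of_tail_sandwich {γ₁ γ₂ : ℝ} (hF₁ : ∀ x, 0 ≤ F₁ x) (hF₂ : ∀ x, 0 ≤ F₂ x)
    (hB : ∀ x, 0 ≤ B x) (hRV₁ : IsRegularlyVarying F₁ γ₁) (hRV₂ : IsRegularlyVarying F₂ γ₂)
    (hind : Tendsto (fun t => B t / (F₁ t + F₂ t)) atTop (nhds 0))
    (hlow : ∀ t, F₁ t + F₂ t - B t ≤ G t)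
    (hup : ∀ δ ∈ Ioo (0 : ℝ) 1, ∀ t, G t ≤ F₁ (t * (1 - δ)) + F₂ (t * (1 - δ)) + B (t * δ)) :
    Tendsto (fun t => G t / (F₁ t + F₂ t)) atTop (nhds 1) := by
  have hpos₁ := hRV₁.eventually_pos hF₁
  have hpos₂ := hRV₂.eventually_pos hF₂
  refine tendsto_order.2 ⟨fun a ha => ?_, fun a ha => ?_⟩
  · have hlim : Tendsto (fun t => 1 - B t / (F₁ t + F₂ t)) atTop (nhds 1) := by
      simpa using tendsto_const_nhds.sub hind
    filter_upwards [hlim.eventually (eventually_gt_nhds ha), hpos₁, hpos₂] with t hat h₁ h₂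
    have hS : 0 < F₁ t + F₂ t := add_pos h₁ h₂
    calc a < 1 - B t / (F₁ t + F₂ t) := hat
      _ = (F₁ t + F₂ t - B t) / (F₁ t + F₂ t) := by field_simp
      _ ≤ G t / (F₁ t + F₂ t) := div_le_div_of_nonneg_right (hlow t) hS.le
  · obtain ⟨δ, ⟨hδ0, hδ1⟩, hδa⟩ := exists_max_rpow_one_sub_lt γ₁ γ₂ ha
    have hlim := ((hRV₁ (1 - δ) (by linarith)).max (hRV₂ (1 - δ) (by linarith))).add
      ((hind.comp (tendsto_id.atTop_mul_const hδ0)).mul ((hRV₁ δ hδ0).max (hRV₂ δ hδ0)))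
    rw [zero_mul, add_zero] at hlim
    filter_upwards [hlim.eventually (eventually_lt_nhds hδa),
      eventually_div_le_max_ratio_add hB hpos₁ hpos₂ hδ0 (hup δ ⟨hδ0, hδ1⟩)] with t hta hGt
    exact hGt.trans_lt hta

end TailSandwich

section TailBounds

variable {Ω : Type*} [MeasurableSpace Ω] (μ : Measure Ω) [IsFiniteMeasure μ] {U₁ U₂ : Ω → ℝ}

theorem measureReal_tail_add_tail_sub_joint_le (hU₂ : Measurable U₂)
    (hU₁nonneg : ∀ ω, 0 ≤ U₁ ω) (hU₂nonneg : ∀ ω, 0 ≤ U₂ ω) (t : ℝ) :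
    μ.real {ω | U₁ ω > t} + μ.real {ω | U₂ ω > t} - μ.real {ω | U₁ ω > t ∧ U₂ ω > t} ≤
      μ.real {ω | U₁ ω + U₂ ω > t} := by
  have hunion : {ω | U₁ ω > t} ∪ {ω | U₂ ω > t} ⊆ {ω | U₁ ω + U₂ ω > t} := by
    rintro ω (h | h) <;> simp only [mem_ofPred_eq] at h ⊢
    · linarith [hU₂nonneg ω]
    · linarith [hU₁nonneg ω]
  have hsplit := measureReal_union_add_inter (μ := μ) (s := {ω | U₁ ω > t})
    (t := {ω | U₂ ω > t}) (hU₂ measurableSet_Ioi)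
  rw [← ofPred_and] at hsplit
  linarith [measureReal_mono (μ := μ) hunion]

theorem measureReal_tail_add_le (δ t : ℝ) :
    μ.real {ω | U₁ ω + U₂ ω > t} ≤ μ.real {ω | U₁ ω > t * (1 - δ)} +
      μ.real {ω | U₂ ω > t * (1 - δ)} + μ.real {ω | U₁ ω > t * δ ∧ U₂ ω > t * δ} := by
  have hcover : {ω | U₁ ω + U₂ ω > t} ⊆ {ω | U₁ ω > t * (1 - δ)} ∪ {ω | U₂ ω > t * (1 - δ)} ∪
      {ω | U₁ ω > t * δ ∧ U₂ ω > t * δ} := by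
    intro ω hω
    simp only [mem_union, mem_ofPred_eq] at hω ⊢
    by_contra! h
    obtain ⟨⟨h₁, h₂⟩, hjoint⟩ := h
    by_cases hδ₁ : U₁ ω > t * δ
    · linarith [hjoint hδ₁]
    · linarith
  calc μ.real {ω | U₁ ω + U₂ ω > t}
      ≤ μ.real ({ω | U₁ ω > t * (1 - δ)} ∪ {ω | U₂ ω > t * (1 - δ)} ∪
          {ω | U₁ ω > t * δ ∧ U₂ ω > t * δ}) := measureReal_mono hcover
    _ ≤ _ := (measureReal_union_le _ _).trans (by gcongr; exact measureReal_union_le _ _)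

end TailBounds

theorem sum_tail_asymptotic_two_general {Ω : Type*} [MeasurableSpace Ω]
    (μ : Measure Ω) [IsProbabilityMeasure μ]
    (U₁ U₂ : Ω → ℝ) (hU₂ : Measurable U₂)
    (hU₁nonneg : ∀ ω, 0 ≤ U₁ ω) (hU₂nonneg : ∀ ω, 0 ≤ U₂ ω)
    (γ₁ γ₂ : ℝ)
    (hRV₁ : ∀ y : ℝ, 0 < y → Tendsto (fun x : ℝ =>
      (μ {ω | U₁ ω > x * y}).toReal / (μ {ω | U₁ ω > x}).toReal) atTop
      (nhds (y ^ (-γ₁))))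
    (hRV₂ : ∀ y : ℝ, 0 < y → Tendsto (fun x : ℝ =>
      (μ {ω | U₂ ω > x * y}).toReal / (μ {ω | U₂ ω > x}).toReal) atTop
      (nhds (y ^ (-γ₂))))
    (htailindep : Tendsto (fun t : ℝ =>
      (μ {ω | U₁ ω > t ∧ U₂ ω > t}).toReal /
        ((μ {ω | U₁ ω > t}).toReal + (μ {ω | U₂ ω > t}).toReal)) atTop (nhds 0)) :
    Tendsto (fun t : ℝ =>
      (μ {ω | U₁ ω + U₂ ω > t}).toReal /
        ((μ {ω | U₁ ω > t}).toReal + (μ {ω | U₂ ω > t}).toReal)) atTop (nhds 1) :=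
  tendsto_div_add_of_tail_sandwich (fun _ => measureReal_nonneg) (fun _ => measureReal_nonneg)
    (fun _ => measureReal_nonneg) hRV₁ hRV₂ htailindep
    (measureReal_tail_add_tail_sub_joint_le μ hU₂ hU₁nonneg hU₂nonneg)
    (fun δ _ => measureReal_tail_add_le μ δ)

theorem sum_tail_asymptotic_two {Ω : Type*} [MeasurableSpace Ω]
    (μ : Measure Ω) [IsProbabilityMeasure μ]
    (U₁ U₂ : Ω → ℝ) (hU₁ : Measurable U₁) (hU₂ : Measurable U₂)
    (hU₁nonneg : ∀ ω, 0 ≤ U₁ ω) (hU₂nonneg : ∀ ω, 0 ≤ U₂ ω)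
    (γ₁ γ₂ : ℝ) (hγ₁ : 0 < γ₁) (hγ₂ : 0 < γ₂)
    (hRV₁ : ∀ y : ℝ, 0 < y → Tendsto (fun x : ℝ =>
      (μ {ω | U₁ ω > x * y}).toReal / (μ {ω | U₁ ω > x}).toReal) atTop
      (nhds (y ^ (-γ₁))))
    (hRV₂ : ∀ y : ℝ, 0 < y → Tendsto (fun x : ℝ =>
      (μ {ω | U₂ ω > x * y}).toReal / (μ {ω | U₂ ω > x}).toReal) atTop
      (nhds (y ^ (-γ₂))))
    (htailindep : Tendsto (fun t : ℝ =>
      (μ {ω | U₁ ω > t ∧ U₂ ω > t}).toReal /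
        ((μ {ω | U₁ ω > t}).toReal + (μ {ω | U₂ ω > t}).toReal)) atTop (nhds 0)) :
    Tendsto (fun t : ℝ =>
      (μ {ω | U₁ ω + U₂ ω > t}).toReal /
        ((μ {ω | U₁ ω > t}).toReal + (μ {ω | U₂ ω > t}).toReal)) atTop (nhds 1) :=
  sum_tail_asymptotic_two_general μ U₁ U₂ hU₂ hU₁nonneg hU₂nonneg γ₁ γ₂ hRV₁ hRV₂ htailindep
end
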